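/- The restriction of S₁₂ to the set of irrational numbers in (0,1), with the subspace topology, is a continuous function; hence S₁₂ (extended in any way to all of (0,1)) is continuous except possibly at the countably many rational points. -/

import Mathlib

/-- The Gauss map `G(x) = 1/x - ⌊1/x⌋`. -/
noncomputable def gaussMap (x : ℝ) : ℝ := 1 / x - ⌊1 / x⌋

/-- The first-two-digit swap map of continued fractions:
`S₁₂(x) = 1/(a₂ + 1/(a₁ + G(G(x))))` with `a₁ = ⌊1/x⌋`, `a₂ = ⌊1/G(x)⌋`. -/
noncomputable def S12 (x : ℝ) : ℝ :=
  1 / ((⌊1 / gaussMap x⌋ : ℝ) + 1 / ((⌊1 / x⌋ : ℝ) + gaussMap (gaussMap x)))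

/-! The Gauss map maps irrationals to irrationals in `(0,1)` and, as `1/x` is never an integer
there, it is continuous at every irrational point. `S₁₂` is built from `G`, `G ∘ G`, the digits
`⌊1/x⌋ = 1/x - G(x)` and `⌊1/G(x)⌋`, and divisions by positive quantities. -/

open Set

namespace Irrational

variable {x : ℝ}

theorem gaussMap (hx : Irrational x) : Irrational (gaussMap x) :=
  (one_div x ▸ hx.inv).sub_intCast _

theorem gaussMap_mem_Ioo (hx : Irrational x) : _root_.gaussMap x ∈ Ioo (0 : ℝ) 1 :=
  ⟨(Int.fract_nonneg (1 / x)).lt_of_ne' hx.gaussMap.ne_zero, Int.fract_lt_one (1 / x)⟩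

theorem continuousAt_gaussMap (hx : Irrational x) : ContinuousAt _root_.gaussMap x :=
  (continuousAt_fract ((one_div x ▸ hx.inv).ne_int _)).comp
    (continuousAt_const.div continuousAt_id hx.ne_zero)

theorem continuousAt_floor_one_div (hx : Irrational x) :
    ContinuousAt (fun y : ℝ => (⌊1 / y⌋ : ℝ)) x := by
  have hfloor : (fun y : ℝ => (⌊1 / y⌋ : ℝ)) = fun y => 1 / y - _root_.gaussMap y := by
    funext y
    simp only [_root_.gaussMap, sub_sub_cancel]
  rw [hfloor]
  exact (continuousAt_const.div continuousAt_id hx.ne_zero).sub hx.continuousAt_gaussMap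

end Irrational

theorem floor_one_div_nonneg {x : ℝ} (hx : 0 ≤ x) : (0 : ℝ) ≤ ⌊1 / x⌋ :=
  Int.cast_nonneg_iff.2 (Int.floor_nonneg.2 (by positivity))

/-- The restriction of `S₁₂` to the irrationals of `(0,1)` (with the subspace
topology) is continuous. -/
theorem S12_continuousOn_irrationals :
    ContinuousOn S12 ({x : ℝ | Irrational x} ∩ Set.Ioo (0 : ℝ) 1) := by
  rintro x ⟨hx, hx01⟩
  refine ContinuousAt.continuousWithinAt ?_
  have hG : ContinuousAt gaussMap x := hx.continuousAt_gaussMap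
  have ha₁ : ContinuousAt (fun y => (⌊1 / y⌋ : ℝ)) x := hx.continuousAt_floor_one_div
  have ha₂ : ContinuousAt (fun y => (⌊1 / gaussMap y⌋ : ℝ)) x :=
    hx.gaussMap.continuousAt_floor_one_div.comp hG
  have hr : ContinuousAt (fun y => gaussMap (gaussMap y)) x :=
    hx.gaussMap.continuousAt_gaussMap.comp hG
  have hinner : 0 < (⌊1 / x⌋ : ℝ) + gaussMap (gaussMap x) :=
    add_pos_of_nonneg_of_pos (floor_one_div_nonneg hx01.1.le) hx.gaussMap.gaussMap_mem_Ioo.1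
  have houter : 0 < (⌊1 / gaussMap x⌋ : ℝ) + 1 / ((⌊1 / x⌋ : ℝ) + gaussMap (gaussMap x)) :=
    add_pos_of_nonneg_of_pos (floor_one_div_nonneg hx.gaussMap_mem_Ioo.1.le)
      (one_div_pos.2 hinner)
  exact continuousAt_const.div (ha₂.add (continuousAt_const.div (ha₁.add hr) hinner.ne'))
    houter.ne'
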